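/- arXiv:0712.0410 — 5 statements merged into one kernel-verified Lean document; each statement's English description precedes it below -/
import Mathlib

section
/- Let x and y be n×n positive definite Hermitian complex matrices such that log(xy) = log(x) + log(y), where log denotes the principal matrix logarithm. Then xy = yx. Equivalently: if a and b are Hermitian n×n complex matrices with exp(a+b) = exp(a)·exp(b), then exp(a)·exp(b) = exp(b)·exp(a). -/
open Matrix

/-- **Proposition 4.** If `a`, `b` are Hermitian `n × n` complex matrices (the
principal logarithms of the positive definite Hermitian matrices `x = exp a`,
`y = exp b`) and `exp (a + b) = exp a * exp b` (i.e. `log (x*y) = log x + log y`),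
then `x` and `y` commute. -/
theorem prop4 (n : ℕ) (a b : Matrix (Fin n) (Fin n) ℂ)
    (ha : a.IsHermitian) (hb : b.IsHermitian)
    (h : NormedSpace.exp (a + b) = NormedSpace.exp a * NormedSpace.exp b) :
    NormedSpace.exp a * NormedSpace.exp b =
      NormedSpace.exp b * NormedSpace.exp a := by
  have hprod : (NormedSpace.exp a * NormedSpace.exp b).IsHermitian := h ▸ (ha.add hb).exp
  exact ((ha.exp.commute_iff hb.exp).mpr hprod).eq
end

section
/- Let u be a nonzero complex number satisfying e^u = 1 + u. Then |Im(u)| > 2π. -/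
open Real

/-- If `u` is a nonzero complex number with `e^u = 1 + u`, then `|Im u| > 2π`. -/
theorem abs_im_gt_two_pi_of_exp_eq_one_add (u : ℂ) (hu : u ≠ 0)
    (h : Complex.exp u = 1 + u) : 2 * π < |u.im| := by
  set x := u.re with hx
  set y := u.im with hy
  have h1 : Real.exp x * Real.cos y = 1 + x := by
    have := congrArg Complex.re h
    simpa [Complex.exp_re] using this
  have h2 : Real.exp x * Real.sin y = y := by
    have := congrArg Complex.im h
    simpa [Complex.exp_im] using this
  by_contra hle
  push_neg at hle
  have hy0 : y ≠ 0 := by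
    intro h0
    have hx0 : x ≠ 0 := by
      intro hx0
      exact hu (Complex.ext hx0 h0)
    have hlt := Real.add_one_lt_exp hx0
    rw [h0, Real.cos_zero, mul_one] at h1
    linarith
  set Y := |y| with hY
  have hYpos : 0 < Y := abs_pos.2 hy0
  have hs : Real.exp x * Real.sin Y = Y := by
    rcases abs_cases y with ⟨ha, _⟩ | ⟨ha, _⟩ <;> rw [hY, ha]
    · exact h2
    · rw [Real.sin_neg]; linarith [h2]
  have hc : Real.exp x * Real.cos Y = 1 + x := by
    rw [hY, Real.cos_abs]; exact h1
  have hexp := Real.exp_pos x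
  have hsinpos : 0 < Real.sin Y := by nlinarith
  have hYlt : Y < π := by
    by_contra hge
    push_neg at hge
    have h2pi : Y ≤ 2 * π := hle
    have hsn : 0 ≤ Real.sin (Y - π) :=
      Real.sin_nonneg_of_nonneg_of_le_pi (by linarith) (by linarith)
    have : Real.sin (Y - π + π) = -Real.sin (Y - π) := Real.sin_add_pi _
    rw [sub_add_cancel] at this
    linarith
  have hsinlt : Real.sin Y < Y := Real.sin_lt hYpos
  have hexp1 : 1 < Real.exp x := by
    nlinarith
  have hxpos : 0 < x := by
    have := Real.exp_lt_exp.mp (by rwa [Real.exp_zero] : Real.exp 0 < Real.exp x)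
    exact this
  have hcospos : 0 < Real.cos Y := by nlinarith
  have hYhalf : Y < π / 2 := by
    by_contra hge
    push_neg at hge
    have := Real.cos_nonpos_of_pi_div_two_le_of_le hge (by linarith [Real.pi_pos])
    linarith
  have htan := Real.lt_tan hYpos hYhalf
  rw [Real.tan_eq_sin_div_cos] at htan
  have hkey : Y * Real.cos Y < Real.sin Y := (lt_div_iff₀ hcospos).mp htan
  nlinarith [mul_pos hexp hsinpos]
end

section
/- Let λ be a nonzero complex number. Then the set of complex numbers z with |Im(z)| < 2π satisfying e^z = λz + 1 (i.e. zeros of the holomorphic function f(z) = e^z − λz − 1 in the open horizontal strip {z : Im(z) ∈ (−2π, 2π)}) is finite. -/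
open Real Filter Bornology

/-! `f z = e^z - λ z - 1` is entire and `f (2πi) = -2πiλ ≠ 0`, so its zeros are isolated and only
finitely many lie in any bounded set. A zero in the strip satisfies `e^{Re z} = ‖λ z + 1‖ = O(Re z)`,
which bounds `Re z` from above; then `‖λ‖ ‖z‖ = ‖e^z - 1‖ ≤ e^{Re z} + 1` bounds `‖z‖`. -/

theorem AnalyticOnNhd.finite_inter_zeros_of_isBounded {𝕜 E : Type*} [NontriviallyNormedField 𝕜]
    [ProperSpace 𝕜] [ConnectedSpace 𝕜] [NormedAddCommGroup E] [NormedSpace 𝕜 E] {f : 𝕜 → E}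
    {x : 𝕜} {S : Set 𝕜} (hf : AnalyticOnNhd 𝕜 f Set.univ) (hx : f x ≠ 0) (hS : IsBounded S) :
    (S ∩ f ⁻¹' {0}).Finite := by
  have hcodiscrete : f ⁻¹' {0}ᶜ ∈ codiscreteWithin (closure S) :=
    codiscreteWithin_mono (Set.subset_univ _) (hf.preimage_zero_mem_codiscrete hx)
  refine (hS.isCompact_closure.finite_sdiff_of_mem_codiscreteWithin hcodiscrete).subset ?_
  rintro z ⟨hzS, hz⟩
  exact ⟨subset_closure hzS, fun h => h hz⟩

theorem Real.bddAbove_setOf_exp_le_mul_add (a c : ℝ) : BddAbove {x : ℝ | exp x ≤ a * x + c} := by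
  have hlarge : ∀ᶠ x in atTop, a * x + c < exp x := by
    filter_upwards [(tendsto_mul_exp_add_div_pow_atTop 1 (-c) 1 one_pos).eventually_gt_atTop a,
      eventually_gt_atTop 0] with x hx hx0
    rw [pow_one, lt_div_iff₀ hx0] at hx
    linarith
  obtain ⟨X, hX⟩ := eventually_atTop.mp hlarge
  exact ⟨X, fun x hx => le_of_not_gt fun hXx => (hX x hXx.le).not_ge hx⟩

theorem Complex.bddAbove_re_of_exp_eq_mul_add_one (l : ℂ) (b : ℝ) :
    BddAbove (Complex.re '' {z : ℂ | |z.im| ≤ b ∧ Complex.exp z = l * z + 1}) := by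
  obtain ⟨X, hX⟩ := Real.bddAbove_setOf_exp_le_mul_add ‖l‖ (‖l‖ * b + 1)
  refine ⟨max X 0, ?_⟩
  rintro _ ⟨z, ⟨him, hz⟩, rfl⟩
  rcases le_or_gt z.re 0 with hre | hre
  · exact hre.trans (le_max_right _ _)
  refine (hX ?_).trans (le_max_left _ _)
  calc Real.exp z.re = ‖l * z + 1‖ := by rw [← hz, Complex.norm_exp]
    _ ≤ ‖l‖ * ‖z‖ + 1 := by simpa [norm_mul] using norm_add_le (l * z) 1
    _ ≤ ‖l‖ * (z.re + b) + 1 := by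
      gcongr
      calc ‖z‖ ≤ |z.re| + |z.im| := Complex.norm_le_abs_re_add_abs_im z
        _ ≤ z.re + b := by rw [abs_of_pos hre]; linarith
    _ = ‖l‖ * z.re + (‖l‖ * b + 1) := by ring

theorem Complex.isBounded_of_exp_eq_mul_add_one {l : ℂ} (hl : l ≠ 0) {S : Set ℂ}
    (hS : ∀ z ∈ S, Complex.exp z = l * z + 1) (hre : BddAbove (Complex.re '' S)) :
    IsBounded S := by
  obtain ⟨X, hX⟩ := hre
  refine (Metric.isBounded_iff_subset_closedBall 0).mpr ⟨(Real.exp X + 1) / ‖l‖, fun z hz => ?_⟩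
  rw [Metric.mem_closedBall, dist_zero_right, le_div_iff₀ (norm_pos_iff.mpr hl), mul_comm,
    ← norm_mul]
  calc ‖l * z‖ = ‖Complex.exp z - 1‖ := by rw [hS z hz, add_sub_cancel_right]
    _ ≤ Real.exp z.re + 1 := by simpa [Complex.norm_exp] using norm_sub_le (Complex.exp z) 1
    _ ≤ Real.exp X + 1 := by gcongr; exact hX ⟨z, hz, rfl⟩

/-- For any nonzero `λ : ℂ`, the zeros of `f(z) = e^z - λz - 1` in the open strip
`{z : |Im z| < 2π}` form a finite set. -/
theorem finite_zeros_in_strip (l : ℂ) (hl : l ≠ 0) :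
    {z : ℂ | |z.im| < 2 * π ∧ Complex.exp z = l * z + 1}.Finite := by
  set S := {z : ℂ | |z.im| < 2 * π ∧ Complex.exp z = l * z + 1}
  have hbounded : IsBounded S := by
    refine Complex.isBounded_of_exp_eq_mul_add_one hl (fun z hz => hz.2) ?_
    refine (Complex.bddAbove_re_of_exp_eq_mul_add_one l (2 * π)).mono (Set.image_mono ?_)
    exact fun z hz => ⟨hz.1.le, hz.2⟩
  have hf : AnalyticOnNhd ℂ (fun z => Complex.exp z - (l * z + 1)) Set.univ := fun z _ =>
    analyticAt_cexp.sub ((analyticAt_const.mul analyticAt_id).add analyticAt_const)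
  have hf_ne : Complex.exp (2 * π * Complex.I) - (l * (2 * π * Complex.I) + 1) ≠ 0 := by
    simp [Complex.exp_two_pi_mul_I, hl, Real.pi_ne_zero, Complex.I_ne_zero]
  refine (hf.finite_inter_zeros_of_isBounded hf_ne hbounded).subset
    (Set.subset_inter subset_rfl fun z hz => ?_)
  simp [hz.2]
end

section
/- Let n ≥ 2, let a₀ be an (n−1)×(n−1) complex matrix, α a complex number, u a complex column vector of length n−1, and set a₁ = a₀ − α·I. Then the matrix exponential of the n×n block matrix a = [[a₀, u],[0, α]] equals e^α · [[exp(a₁), φ(a₁)·u],[0, 1]], where φ(a₁) = Σ_{k≥0} a₁^k/(k+1)! is the matrix obtained by applying the power series of φ(z) = (e^z − 1)/z (with φ(0) = 1) to a₁. -/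
/-! Write `a = α • 1 + N` with `N = [[a₁, u], [0, 0]]`. The scalar part commutes with `N` and
contributes the factor `e^α`. Since `N ^ (k + 1) = [[a₁ ^ (k + 1), a₁ ^ k * u], [0, 0]]`, summing
the exponential series of `N` blockwise gives `exp a₁` in the upper-left block,
`Σ a₁ ^ k * u / (k + 1)! = φ(a₁) * u` in the upper-right one, and only `N ^ 0 = 1` contributes to
the lower-right entry. -/

open Matrix

/-- `φ` applied to a square complex matrix: `φ(m) = Σ_{k≥0} m^k / (k+1)!`,
the power series of `φ(z) = (e^z - 1)/z` (with `φ(0) = 1`). -/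
noncomputable def matPhi {m : Type*} [Fintype m] [DecidableEq m]
    (A : Matrix m m ℂ) : Matrix m m ℂ :=
  ∑' k : ℕ, (((k + 1).factorial : ℂ))⁻¹ • A ^ k

open Nat NormedSpace

theorem HasSum.matrix_fromBlocks {X R l m n o : Type*} [AddCommMonoid R] [TopologicalSpace R]
    {A : X → Matrix n l R} {B : X → Matrix n m R} {C : X → Matrix o l R} {D : X → Matrix o m R}
    {a : Matrix n l R} {b : Matrix n m R} {c : Matrix o l R} {d : Matrix o m R}
    (hA : HasSum A a) (hB : HasSum B b) (hC : HasSum C c) (hD : HasSum D d) :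
    HasSum (fun x => fromBlocks (A x) (B x) (C x) (D x)) (fromBlocks a b c d) := by
  refine Pi.hasSum.mpr fun i => Pi.hasSum.mpr fun j => ?_
  rcases i with i | i <;> rcases j with j | j
  exacts [Pi.hasSum.1 (Pi.hasSum.1 hA i) j, Pi.hasSum.1 (Pi.hasSum.1 hB i) j,
    Pi.hasSum.1 (Pi.hasSum.1 hC i) j, Pi.hasSum.1 (Pi.hasSum.1 hD i) j]

theorem Matrix.fromBlocks_zero_zero_pow_succ {m o R : Type*} [Fintype m] [Fintype o]
    [DecidableEq m] [DecidableEq o] [Semiring R] (A : Matrix m m R) (v : Matrix m o R) (k : ℕ) :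
    fromBlocks A v 0 0 ^ (k + 1) = fromBlocks (A ^ (k + 1)) (A ^ k * v) (0 : Matrix o m R) 0 := by
  induction k with
  | zero => simp
  | succ k ih => simp [pow_succ _ (k + 1), ih, fromBlocks_multiply]

section

variable {m : Type*} [Fintype m] [DecidableEq m]

-- Any submultiplicative norm gives the topology of `Matrix m m ℂ`; this one unlocks the
-- Banach-algebra facts about `exp`.
attribute [local instance] Matrix.linftyOpNormedRing Matrix.linftyOpNormedAlgebra

theorem hasSum_matPhi (A : Matrix m m ℂ) :
    HasSum (fun k : ℕ => ((k + 1)! : ℂ)⁻¹ • A ^ k) (matPhi A) := by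
  refine Summable.hasSum (.of_norm_bounded (norm_expSeries_summable' (𝕂 := ℂ) A) fun k => ?_)
  rw [norm_smul, norm_smul]
  gcongr
  simp only [norm_inv, Complex.norm_natCast]
  gcongr
  exact k.le_succ

theorem Matrix.exp_algebraMap_add (z : ℂ) (N : Matrix m m ℂ) :
    exp (algebraMap ℂ _ z + N) = Complex.exp z • exp N := by
  have h : exp (algebraMap ℂ (Matrix m m ℂ) z) = algebraMap ℂ _ (Complex.exp z) :=
    Complex.exp_eq_exp_ℂ ▸ (algebraMap_exp_comm z).symm
  rw [Matrix.exp_add_of_commute _ _ (Algebra.commutes z N), h, Algebra.smul_def]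

theorem Matrix.exp_fromBlocks_zero_zero {o : Type*} [Fintype o] [DecidableEq o]
    (A : Matrix m m ℂ) (v : Matrix m o ℂ) :
    exp (fromBlocks A v 0 0) = fromBlocks (exp A) (matPhi A * v) 0 (1 : Matrix o o ℂ) := by
  refine (exp_series_hasSum_exp' (𝕂 := ℂ) _).unique ?_
  rw [← hasSum_nat_add_iff' 1]
  have h_sub_one : fromBlocks (exp A) (matPhi A * v) 0 1 - 1 =
      fromBlocks (exp A - 1) (matPhi A * v) 0 (0 : Matrix o o ℂ) := by
    rw [sub_eq_iff_eq_add, ← fromBlocks_one, fromBlocks_add]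
    simp
  simp only [fromBlocks_zero_zero_pow_succ, fromBlocks_smul, smul_zero, Finset.sum_range_one,
    factorial_zero, cast_one, inv_one, pow_zero, one_smul, h_sub_one]
  refine .matrix_fromBlocks ?_ ?_ hasSum_zero hasSum_zero
  · have h := (hasSum_nat_add_iff' 1).mpr (exp_series_hasSum_exp' (𝕂 := ℂ) A)
    simp only [Finset.sum_range_one, factorial_zero, cast_one, inv_one, pow_zero, one_smul] at h
    exact h
  · simpa [Function.comp_def, smul_mul_assoc] using
      (hasSum_matPhi A).map (mulRightLinearMap m ℂ v) (continuous_id.matrix_mul continuous_const)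

end

theorem exp_fromBlocks_general (n : ℕ)
    (a₀ : Matrix (Fin (n - 1)) (Fin (n - 1)) ℂ) (α : ℂ)
    (u : Matrix (Fin (n - 1)) Unit ℂ)
    (a₁ : Matrix (Fin (n - 1)) (Fin (n - 1)) ℂ) (ha₁ : a₁ = a₀ - α • 1) :
    NormedSpace.exp (Matrix.fromBlocks a₀ u 0 (Matrix.of fun _ _ => α)) =
      Complex.exp α •
        Matrix.fromBlocks (NormedSpace.exp a₁) (matPhi a₁ * u) 0 (1 : Matrix Unit Unit ℂ) := by
  have h_split : fromBlocks a₀ u 0 (of fun _ _ => α) =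
      algebraMap ℂ _ α + fromBlocks a₁ u 0 (0 : Matrix Unit Unit ℂ) := by
    rw [Algebra.algebraMap_eq_smul_one, ← fromBlocks_one, fromBlocks_smul, fromBlocks_add, ha₁]
    congr
    · abel
    · simp
    · simp
    · ext; simp
  rw [h_split, exp_algebraMap_add, exp_fromBlocks_zero_zero]

/-- The exponential of the block matrix `a = [[a₀, u], [0, α]]` is
`e^α • [[exp a₁, φ(a₁) * u], [0, 1]]`, where `a₁ = a₀ - α • I`. -/
theorem exp_fromBlocks (n : ℕ) (hn : 2 ≤ n)
    (a₀ : Matrix (Fin (n - 1)) (Fin (n - 1)) ℂ) (α : ℂ)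
    (u : Matrix (Fin (n - 1)) Unit ℂ)
    (a₁ : Matrix (Fin (n - 1)) (Fin (n - 1)) ℂ) (ha₁ : a₁ = a₀ - α • 1) :
    NormedSpace.exp (Matrix.fromBlocks a₀ u 0 (Matrix.of fun _ _ => α)) =
      Complex.exp α •
        Matrix.fromBlocks (NormedSpace.exp a₁) (matPhi a₁ * u) 0 (1 : Matrix Unit Unit ℂ) :=
  exp_fromBlocks_general n a₀ α u a₁ ha₁
end

section
/- Let a₁ and b₁ be commuting square complex matrices of the same size, let u, v be complex column vectors of matching length, and set w = a₁·v − b₁·u. If (φ(a₁+b₁) − φ(a₁))·u = (exp(a₁)·φ(b₁) − φ(a₁+b₁))·v, then (φ(a₁+b₁) − φ(a₁))·w = 0, where for a square matrix m, φ(m) = Σ_{k≥0} m^k/(k+1)!. -/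
open Matrix

/-!
With `P = φ(a₁ + b₁)`, `Q = φ(a₁)`, `R = φ(b₁)` and `E = exp a₁`, all of which commute with `b₁`,
the hypothesis gives `(P - Q) * w = ((P - Q) * a₁ - b₁ * (E * R - P)) * v`. Since
`X * φ(X) = exp X - 1` and `exp (a₁ + b₁) = E * exp b₁`, the matrix in front of `v` is
`(E * exp b₁ - 1) - (E - 1) - E * (exp b₁ - 1) = 0`.
-/

theorem NormedSpace.hasSum_expSeries_succ {𝕂 𝔸 : Type*} [RCLike 𝕂] [NormedRing 𝔸]
    [NormedAlgebra 𝕂 𝔸] [CompleteSpace 𝔸] (x : 𝔸) :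
    HasSum (fun k : ℕ => ((k + 1).factorial⁻¹ : 𝕂) • x ^ (k + 1)) (NormedSpace.exp x - 1) := by
  have h := (hasSum_nat_add_iff' 1).mpr (NormedSpace.exp_series_hasSum_exp' (𝕂 := 𝕂) x)
  rwa [Finset.sum_range_one, Nat.factorial_zero, Nat.cast_one, inv_one, pow_zero, one_smul] at h

section

variable {m : Type*} [Fintype m] [DecidableEq m]

open scoped Matrix.Norms.Operator in
theorem summable_matPhi_series (A : Matrix m m ℂ) :
    Summable fun k : ℕ => (((k + 1).factorial : ℂ))⁻¹ • A ^ k := by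
  refine .of_norm_bounded (NormedSpace.norm_expSeries_summable' (𝕂 := ℂ) A) fun k => ?_
  rw [norm_smul, norm_smul, norm_inv, norm_inv, Complex.norm_natCast, Complex.norm_natCast]
  gcongr
  omega

open scoped Matrix.Norms.Operator in
theorem mul_matPhi (A : Matrix m m ℂ) : A * matPhi A = NormedSpace.exp A - 1 :=
  ((summable_matPhi_series A).hasSum.mul_left A).unique <| by
    simp only [mul_smul_comm, ← pow_succ']
    exact NormedSpace.hasSum_expSeries_succ A

theorem Commute.matPhi_right {A B : Matrix m m ℂ} (h : Commute A B) :
    Commute A (matPhi B) :=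
  .tsum_right A fun k => (h.pow_right k).smul_right _

theorem Commute.matPhi_left {A B : Matrix m m ℂ} (h : Commute A B) :
    Commute (matPhi A) B :=
  h.symm.matPhi_right.symm

theorem matPhi_mul (A : Matrix m m ℂ) : matPhi A * A = NormedSpace.exp A - 1 := by
  rw [(Commute.refl A).matPhi_left.eq, mul_matPhi]

theorem matPhi_add_sub_matPhi_mul_eq {a b : Matrix m m ℂ} (h : Commute a b) :
    (matPhi (a + b) - matPhi a) * a = b * (NormedSpace.exp a * matPhi b - matPhi (a + b)) := by
  have hb : b * (NormedSpace.exp a * matPhi b) = NormedSpace.exp a * (NormedSpace.exp b - 1) := by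
    rw [← mul_assoc, h.symm.exp_right.eq, mul_assoc, mul_matPhi]
  have hab : matPhi (a + b) * a + b * matPhi (a + b) =
      NormedSpace.exp a * NormedSpace.exp b - 1 := by
    rw [(h.symm.add_right (.refl b)).matPhi_right.eq, ← mul_add, matPhi_mul,
      Matrix.exp_add_of_commute a b h]
  rw [sub_mul, mul_sub, matPhi_mul, hb, eq_sub_of_add_eq hab, mul_sub, mul_one]
  abel

end

/-- Equation (7): if `a₁`, `b₁` commute, `w = a₁ * v - b₁ * u`, and
`(φ(a₁+b₁) - φ(a₁)) * u = (exp a₁ * φ(b₁) - φ(a₁+b₁)) * v`, then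
`(φ(a₁+b₁) - φ(a₁)) * w = 0`. -/
theorem matPhi_w_eq_zero {m : Type*} [Fintype m] [DecidableEq m]
    (a₁ b₁ : Matrix m m ℂ) (hcomm : a₁ * b₁ = b₁ * a₁)
    (u v : Matrix m Unit ℂ) (w : Matrix m Unit ℂ) (hw : w = a₁ * v - b₁ * u)
    (h : (matPhi (a₁ + b₁) - matPhi a₁) * u =
      (NormedSpace.exp a₁ * matPhi b₁ - matPhi (a₁ + b₁)) * v) :
    (matPhi (a₁ + b₁) - matPhi a₁) * w = 0 := by
  have hb : Commute b₁ (matPhi (a₁ + b₁) - matPhi a₁) :=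
    ((Commute.symm hcomm).add_right (.refl b₁)).matPhi_right.sub_right
      (Commute.symm hcomm).matPhi_right
  calc (matPhi (a₁ + b₁) - matPhi a₁) * w
      = (matPhi (a₁ + b₁) - matPhi a₁) * a₁ * v - b₁ * ((matPhi (a₁ + b₁) - matPhi a₁) * u) := by
        rw [hw, Matrix.mul_sub, ← Matrix.mul_assoc, ← Matrix.mul_assoc, ← Matrix.mul_assoc, hb.eq]
    _ = 0 := by
        rw [h, matPhi_add_sub_matPhi_mul_eq hcomm, Matrix.mul_assoc, sub_self]
end
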